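/- Let f : ℝ^d → ℝ be convex and M₂-Lipschitz in the Euclidean norm, and let ẽ be uniformly distributed on the unit ℓ₁-ball B₁^d(1). Define f_γ(x) := E[f(x + γ ẽ)] for γ > 0. Then for all x, f(x) ≤ f_γ(x) ≤ f(x) + (2/√d) γ M₂. -/

import Mathlib

/-!
Lower bound: since the ℓ₁-ball is centrally symmetric, `x + γ ẽ` has mean `x`, so Jensen's
inequality gives `f x ≤ E[f (x + γ ẽ)]`. Upper bound: the Lipschitz condition gives
`E[f (x + γ ẽ)] ≤ f x + γ M₂ E‖ẽ‖₂`, and `E‖ẽ‖₂ ≤ √(E‖ẽ‖₂²) ≤ 2/√d`. For the second moment, the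
part of the ball where `s ≤ ẽᵢ` lies in the translate by `s eᵢ` of the ball scaled by `1 - s`,
so `P(s ≤ |ẽᵢ|) ≤ 2 (1 - s)^d`; the layer-cake formula then gives
`E[ẽᵢ²] ≤ 4 / ((d + 1) (d + 2))`, and summing over `i`, `E‖ẽ‖₂² ≤ 4 / d`.
-/

open MeasureTheory Pointwise

section Smoothing

variable {E : Type*} [NormedAddCommGroup E]

lemma continuous_of_abs_sub_le_mul_norm {f : E → ℝ} {M : ℝ}
    (hf : ∀ x y, |f y - f x| ≤ M * ‖y - x‖) : Continuous f :=
  (LipschitzWith.of_dist_le' fun a b => by rw [Real.dist_eq, dist_eq_norm]; exact hf b a).continuous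

lemma nonneg_of_abs_sub_le_mul_norm [Nontrivial E] {f : E → ℝ} {M : ℝ}
    (hf : ∀ x y, |f y - f x| ≤ M * ‖y - x‖) : 0 ≤ M := by
  obtain ⟨v, hv⟩ := exists_ne (0 : E)
  have h := (abs_nonneg _).trans (hf 0 v)
  rw [sub_zero] at h
  exact nonneg_of_mul_nonneg_left h (norm_pos_iff.2 hv)

variable [NormedSpace ℝ E] [MeasurableSpace E]

lemma setIntegral_id_eq_zero_of_neg_eq [MeasurableNeg E] {μ : Measure E} [μ.IsNegInvariant]
    {s : Set E} (hs : -s = s) : ∫ z in s, z ∂μ = 0 := by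
  have h := (Measure.measurePreserving_neg μ).setIntegral_preimage_emb
    (MeasurableEquiv.neg E).measurableEmbedding id s
  rw [show Neg.neg ⁻¹' s = s from hs] at h
  simp only [id] at h
  rw [integral_neg] at h
  have h2 : (2 : ℝ) • ∫ z in s, z ∂μ = 0 := by
    rw [two_smul]; nth_rw 1 [← h]; exact neg_add_cancel _
  exact (smul_eq_zero.mp h2).resolve_left two_ne_zero

variable [OpensMeasurableSpace E] {μ : Measure E} [IsFiniteMeasureOnCompacts μ] {s : Set E}

lemma setAverage_add_smul_of_setIntegral_id_eq_zero [CompleteSpace E] (hs : IsCompact s)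
    (hμ : μ s ≠ 0) (hmean : ∫ e in s, e ∂μ = 0) (x : E) (γ : ℝ) :
    ⨍ e in s, (x + γ • e) ∂μ = x := by
  have hV : μ.real s ≠ 0 := ENNReal.toReal_ne_zero.2 ⟨hμ, hs.measure_lt_top.ne⟩
  have hsmul : IntegrableOn (fun e => γ • e) s μ :=
    (continuous_id.const_smul γ).continuousOn.integrableOn_compact hs
  rw [setAverage_eq, integral_add (integrableOn_const (C := x) hs.measure_lt_top.ne) hsmul,
    integral_smul, hmean, smul_zero, add_zero, setIntegral_const, smul_smul, inv_mul_cancel₀ hV,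
    one_smul]

lemma ConvexOn.le_setAverage_add_smul [CompleteSpace E] {f : E → ℝ} (hf : ConvexOn ℝ Set.univ f)
    (hfc : Continuous f) (hs : IsCompact s) (hμ : μ s ≠ 0) (hmean : ∫ e in s, e ∂μ = 0) (x : E)
    (γ : ℝ) : f x ≤ ⨍ e in s, f (x + γ • e) ∂μ := by
  have hcont : Continuous fun e : E => x + γ • e := by fun_prop
  have h := hf.map_set_average_le hfc.continuousOn isClosed_univ hμ hs.measure_lt_top.ne
    (ae_of_all _ fun _ => Set.mem_univ _) (hcont.continuousOn.integrableOn_compact hs)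
    ((hfc.comp hcont).continuousOn.integrableOn_compact hs)
  rwa [setAverage_add_smul_of_setIntegral_id_eq_zero hs hμ hmean] at h

lemma setAverage_add_smul_le {f : E → ℝ} {M γ : ℝ} (hf : ∀ x y, |f y - f x| ≤ M * ‖y - x‖)
    (hγ : 0 ≤ γ) (hs : IsCompact s) (hμ : μ s ≠ 0) (x : E) :
    ⨍ e in s, f (x + γ • e) ∂μ ≤ f x + M * γ * ⨍ e in s, ‖e‖ ∂μ := by
  have hV : 0 < μ.real s := ENNReal.toReal_pos hμ hs.measure_lt_top.ne
  have hconst := integrableOn_const (μ := μ) (C := f x) hs.measure_lt_top.ne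
  have hnorm := (continuous_norm.const_mul (M * γ)).continuousOn.integrableOn_compact
    (μ := μ) hs
  have hpt : ∀ e ∈ s, f (x + γ • e) ≤ f x + M * γ * ‖e‖ := fun e _ => by
    have h := (le_abs_self _).trans (hf x (x + γ • e))
    rw [add_sub_cancel_left, norm_smul, Real.norm_of_nonneg hγ] at h
    linarith
  have hint : ∫ e in s, f (x + γ • e) ∂μ ≤ μ.real s * f x + M * γ * ∫ e in s, ‖e‖ ∂μ := by
    refine (setIntegral_mono_on (g := fun e => f x + M * γ * ‖e‖)
      (((continuous_of_abs_sub_le_mul_norm hf).comp (by fun_prop)).continuousOn.integrableOn_compact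
        hs) (hconst.add hnorm) hs.measurableSet hpt).trans_eq ?_
    rw [integral_add hconst hnorm, setIntegral_const, integral_const_mul, smul_eq_mul]
  rw [setAverage_eq, setAverage_eq, smul_eq_mul, smul_eq_mul, inv_mul_le_iff₀ hV]
  refine hint.trans_eq ?_
  field_simp

end Smoothing

lemma integral_one_sub_pow_mul (n : ℕ) :
    ∫ u in (0 : ℝ)..1, (1 - u) ^ n * (2 * u) = 2 / ((n + 1) * (n + 2)) := by
  have h := intervalIntegral.integral_comp_sub_left
    (fun v : ℝ => 2 * v ^ n - 2 * v ^ (n + 1)) (a := 0) (b := 1) 1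
  simp only [sub_self, sub_zero] at h
  rw [show (fun u : ℝ => (1 - u) ^ n * (2 * u)) = fun u => 2 * (1 - u) ^ n - 2 * (1 - u) ^ (n + 1)
    by ext; ring, h,
    intervalIntegral.integral_sub (by apply Continuous.intervalIntegrable; fun_prop)
      (by apply Continuous.intervalIntegrable; fun_prop),
    intervalIntegral.integral_const_mul, intervalIntegral.integral_const_mul, integral_pow,
    integral_pow]
  field_simp
  push_cast
  ring

lemma integral_one_sub_sqrt_pow (n : ℕ) :
    ∫ t in (0 : ℝ)..1, (1 - √t) ^ n = 2 / ((n + 1) * (n + 2)) := by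
  have h := intervalIntegral.integral_comp_mul_deriv (a := 0) (b := 1) (f := fun u : ℝ => u ^ 2)
    (f' := fun u => 2 * u) (g := fun t => (1 - √t) ^ n)
    (fun u _ => by simpa [mul_comm] using hasDerivAt_pow 2 u) (by fun_prop) (by fun_prop)
  simp only [Function.comp_def] at h
  norm_num at h
  rw [← h, ← integral_one_sub_pow_mul]
  refine intervalIntegral.integral_congr fun u hu => ?_
  rw [Set.uIcc_of_le zero_le_one] at hu
  simp [Real.sqrt_sq hu.1]

section L1Ball

variable {ι : Type*} [Fintype ι]

def l1Ball (ι : Type*) [Fintype ι] : Set (EuclideanSpace ℝ ι) := {z | ∑ i, |z i| ≤ 1}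

lemma isClosed_l1Ball : IsClosed (l1Ball ι) := isClosed_le (by fun_prop) continuous_const

lemma abs_apply_le_one_of_mem_l1Ball {z : EuclideanSpace ℝ ι} (hz : z ∈ l1Ball ι) (i : ι) :
    |z i| ≤ 1 :=
  (Finset.single_le_sum (fun j _ => abs_nonneg (z j)) (Finset.mem_univ i)).trans hz

lemma norm_le_one_of_mem_l1Ball {z : EuclideanSpace ℝ ι} (hz : z ∈ l1Ball ι) : ‖z‖ ≤ 1 := by
  have h : ‖z‖ ^ 2 ≤ 1 := by
    rw [EuclideanSpace.real_norm_sq_eq]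
    calc ∑ i, z i ^ 2 ≤ ∑ i, |z i| := Finset.sum_le_sum fun i _ => by
          rw [← sq_abs]; nlinarith [abs_nonneg (z i), abs_apply_le_one_of_mem_l1Ball hz i]
      _ ≤ 1 := hz
  nlinarith [norm_nonneg z]

lemma isCompact_l1Ball : IsCompact (l1Ball ι) :=
  Metric.isCompact_of_isClosed_isBounded isClosed_l1Ball <| Metric.isBounded_closedBall.subset
    fun _ hz => mem_closedBall_zero_iff.2 (norm_le_one_of_mem_l1Ball hz)

lemma volume_l1Ball_pos : 0 < volume (l1Ball ι) := by
  have hopen : IsOpen {z : EuclideanSpace ℝ ι | ∑ i, |z i| < 1} :=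
    isOpen_lt (by fun_prop) continuous_const
  exact (hopen.measure_pos volume ⟨0, by simp⟩).trans_le
    (measure_mono fun z (hz : ∑ i, |z i| < 1) => hz.le)

lemma volume_l1Ball_lt_top : volume (l1Ball ι) < ⊤ := isCompact_l1Ball.measure_lt_top

lemma neg_l1Ball : -l1Ball ι = l1Ball ι := by
  ext z; simp [l1Ball]

lemma mem_smul_l1Ball_iff {r : ℝ} (hr : 0 ≤ r) {w : EuclideanSpace ℝ ι} :
    w ∈ r • l1Ball ι ↔ ∑ i, |w i| ≤ r := by
  rcases hr.eq_or_lt with rfl | hr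
  · rw [Set.zero_smul_set ⟨0, by simp [l1Ball]⟩, Set.mem_zero,
      (Finset.sum_nonneg fun i _ => abs_nonneg (w i)).ge_iff_eq',
      Finset.sum_eq_zero_iff_of_nonneg fun i _ => abs_nonneg _]
    simp [← WithLp.ofLp_eq_zero, funext_iff]
  · rw [Set.mem_smul_set_iff_inv_smul_mem₀ hr.ne']
    simp [l1Ball, abs_mul, ← Finset.mul_sum, abs_of_pos hr, inv_mul_le_iff₀ hr]

lemma setOf_le_apply_inter_l1Ball_subset [DecidableEq ι] (i : ι) {s : ℝ} (hs : 0 ≤ s) :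
    {z | s ≤ z i} ∩ l1Ball ι ⊆ s • EuclideanSpace.single i (1 : ℝ) +ᵥ (1 - s) • l1Ball ι := by
  rintro z ⟨hzi : s ≤ z i, hz⟩
  have hs1 : s ≤ 1 := hzi.trans ((le_abs_self _).trans (abs_apply_le_one_of_mem_l1Ball hz i))
  have habs : ∀ j, |(-(s • EuclideanSpace.single i (1 : ℝ)) +ᵥ z) j|
      = |z j| - if j = i then s else 0 := by
    intro j
    by_cases hj : j = i
    · subst hj
      simp [abs_of_nonneg (hs.trans hzi), abs_of_nonneg (sub_nonneg.2 hzi), neg_add_eq_sub]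
    · simp [hj]
  rw [Set.mem_vadd_set_iff_neg_vadd_mem, mem_smul_l1Ball_iff (sub_nonneg.2 hs1)]
  simp only [habs, Finset.sum_sub_distrib, Finset.sum_ite_eq', Finset.mem_univ, if_true]
  linarith [show ∑ j, |z j| ≤ 1 from hz]

lemma volume_setOf_le_apply_inter_l1Ball_le (i : ι) {s : ℝ} (hs0 : 0 ≤ s) (hs1 : s ≤ 1) :
    volume ({z | s ≤ z i} ∩ l1Ball ι)
      ≤ ENNReal.ofReal ((1 - s) ^ Fintype.card ι) * volume (l1Ball ι) := by
  classical
  refine (measure_mono (setOf_le_apply_inter_l1Ball_subset i hs0)).trans_eq ?_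
  rw [measure_vadd, Measure.addHaar_smul, finrank_euclideanSpace,
    abs_of_nonneg (pow_nonneg (sub_nonneg.2 hs1) _)]

lemma volume_setOf_le_abs_apply_inter_l1Ball_le (i : ι) {s : ℝ} (hs0 : 0 ≤ s) (hs1 : s ≤ 1) :
    volume ({z | s ≤ |z i|} ∩ l1Ball ι)
      ≤ 2 * ENNReal.ofReal ((1 - s) ^ Fintype.card ι) * volume (l1Ball ι) := by
  set A := {z : EuclideanSpace ℝ ι | s ≤ z i} ∩ l1Ball ι
  have hsub : {z | s ≤ |z i|} ∩ l1Ball ι ⊆ A ∪ -A := by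
    rintro z ⟨hzi : s ≤ |z i|, hz⟩
    rcases le_abs'.1 hzi with h | h
    · exact Or.inr ⟨by simpa using le_neg_of_le_neg h, by rwa [← neg_l1Ball] at hz⟩
    · exact Or.inl ⟨h, hz⟩
  calc volume ({z | s ≤ |z i|} ∩ l1Ball ι) ≤ volume A + volume (-A) :=
        (measure_mono hsub).trans (measure_union_le _ _)
    _ = 2 * volume A := by rw [Measure.measure_neg, two_mul]
    _ ≤ _ := by
        rw [mul_assoc]; gcongr; exact volume_setOf_le_apply_inter_l1Ball_le i hs0 hs1

lemma measureReal_setOf_le_sq_apply_inter_l1Ball_le (i : ι) {t : ℝ} (ht0 : 0 ≤ t) (ht1 : t ≤ 1) :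
    volume.real ({z | t ≤ z i ^ 2} ∩ l1Ball ι)
      ≤ 2 * (1 - √t) ^ Fintype.card ι * volume.real (l1Ball ι) := by
  have hsub : {z : EuclideanSpace ℝ ι | t ≤ z i ^ 2} ∩ l1Ball ι ⊆ {z | √t ≤ |z i|} ∩ l1Ball ι :=
    Set.inter_subset_inter_left _ fun z (hz : t ≤ z i ^ 2) => by
      simpa [Real.sqrt_sq_eq_abs] using Real.sqrt_le_sqrt hz
  have hs1 : √t ≤ 1 := Real.sqrt_le_one.2 ht1
  calc volume.real ({z | t ≤ z i ^ 2} ∩ l1Ball ι)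
      ≤ (2 * ENNReal.ofReal ((1 - √t) ^ Fintype.card ι) * volume (l1Ball ι)).toReal :=
        ENNReal.toReal_mono (by finiteness [volume_l1Ball_lt_top (ι := ι)])
          ((measure_mono hsub).trans
            (volume_setOf_le_abs_apply_inter_l1Ball_le i (Real.sqrt_nonneg t) hs1))
    _ = 2 * (1 - √t) ^ Fintype.card ι * volume.real (l1Ball ι) := by
        rw [ENNReal.toReal_mul, ENNReal.toReal_mul, ENNReal.toReal_ofReal
          (pow_nonneg (sub_nonneg.2 hs1) _), measureReal_def]
        norm_num

lemma setIntegral_l1Ball_sq_apply_le (i : ι) :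
    ∫ z in l1Ball ι, z i ^ 2
      ≤ 4 / ((Fintype.card ι + 1) * (Fintype.card ι + 2)) * volume.real (l1Ball ι) := by
  set n := Fintype.card ι
  have hint : IntegrableOn (fun z : EuclideanSpace ℝ ι => z i ^ 2) (l1Ball ι) :=
    ContinuousOn.integrableOn_compact isCompact_l1Ball (by fun_prop)
  have hle_one : ∀ᵐ z ∂volume.restrict (l1Ball ι), z i ^ 2 ≤ 1 :=
    ae_restrict_of_forall_mem isClosed_l1Ball.measurableSet fun z hz => by
      rw [← sq_abs]; nlinarith [abs_nonneg (z i), abs_apply_le_one_of_mem_l1Ball hz i]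
  have htail : ∀ t ∈ Set.Ioc (0 : ℝ) 1,
      (volume.restrict (l1Ball ι)).real {z | t ≤ z i ^ 2}
        ≤ 2 * (1 - √t) ^ n * volume.real (l1Ball ι) := fun t ht => by
    rw [measureReal_restrict_apply (measurableSet_le measurable_const (by fun_prop))]
    exact measureReal_setOf_le_sq_apply_inter_l1Ball_le i ht.1.le ht.2
  rw [hint.integral_eq_integral_Ioc_meas_le (ae_of_all _ fun _ => sq_nonneg _) hle_one]
  calc ∫ t in Set.Ioc 0 1, (volume.restrict (l1Ball ι)).real {z | t ≤ z i ^ 2}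
      ≤ ∫ t in Set.Ioc 0 1, 2 * (1 - √t) ^ n * volume.real (l1Ball ι) :=
        integral_mono_of_nonneg (ae_of_all _ fun _ => measureReal_nonneg)
          (by apply Continuous.integrableOn_Ioc; fun_prop)
          (ae_restrict_of_forall_mem measurableSet_Ioc htail)
    _ = 4 / ((n + 1) * (n + 2)) * volume.real (l1Ball ι) := by
        rw [← intervalIntegral.integral_of_le zero_le_one, intervalIntegral.integral_mul_const,
          intervalIntegral.integral_const_mul, integral_one_sub_sqrt_pow]
        ring

lemma setAverage_l1Ball_norm_sq_le : ⨍ z in l1Ball ι, ‖z‖ ^ 2 ≤ 4 / Fintype.card ι := by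
  set n := Fintype.card ι
  have hV : 0 < volume.real (l1Ball ι) :=
    ENNReal.toReal_pos volume_l1Ball_pos.ne' volume_l1Ball_lt_top.ne
  have hint : ∫ z in l1Ball ι, ‖z‖ ^ 2 ≤ n * (4 / ((n + 1) * (n + 2))) * volume.real (l1Ball ι) :=
    calc ∫ z in l1Ball ι, ‖z‖ ^ 2 = ∑ i, ∫ z in l1Ball ι, z i ^ 2 := by
          simp_rw [EuclideanSpace.real_norm_sq_eq]
          exact integral_finsetSum _ fun i _ =>
            ContinuousOn.integrableOn_compact isCompact_l1Ball (by fun_prop)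
      _ ≤ ∑ _i : ι, 4 / ((n + 1) * (n + 2)) * volume.real (l1Ball ι) :=
          Finset.sum_le_sum fun i _ => setIntegral_l1Ball_sq_apply_le i
      _ = n * (4 / ((n + 1) * (n + 2))) * volume.real (l1Ball ι) := by
          rw [Finset.sum_const, Finset.card_univ, nsmul_eq_mul, mul_assoc]
  have hn : (n : ℝ) * (4 / ((n + 1) * (n + 2))) ≤ 4 / n := by
    rcases (Nat.zero_le n).eq_or_lt with hn | hn
    · simp [← hn]
    · rw [mul_div_assoc', div_le_div_iff₀ (by positivity) (by exact_mod_cast hn)]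
      nlinarith
  rw [setAverage_eq, smul_eq_mul, inv_mul_le_iff₀ hV]
  nlinarith

lemma setAverage_l1Ball_norm_le : ⨍ z in l1Ball ι, ‖z‖ ≤ 2 / √(Fintype.card ι) := by
  have hcont : Continuous fun z : EuclideanSpace ℝ ι => ‖z‖ ^ 2 := by fun_prop
  have jensen := Real.strictConcaveOn_sqrt.concaveOn.le_map_set_average
    Real.continuous_sqrt.continuousOn isClosed_Ici volume_l1Ball_pos.ne' volume_l1Ball_lt_top.ne
    (ae_of_all _ fun z => Set.mem_Ici.2 (sq_nonneg ‖z‖))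
    (hcont.continuousOn.integrableOn_compact isCompact_l1Ball)
    ((Real.continuous_sqrt.comp hcont).continuousOn.integrableOn_compact isCompact_l1Ball)
  simp only [Real.sqrt_sq (norm_nonneg _)] at jensen
  calc ⨍ z in l1Ball ι, ‖z‖ ≤ √(⨍ z in l1Ball ι, ‖z‖ ^ 2) := jensen
    _ ≤ √(4 / Fintype.card ι) := Real.sqrt_le_sqrt setAverage_l1Ball_norm_sq_le
    _ = 2 / √(Fintype.card ι) := by
        rw [Real.sqrt_div' _ (Nat.cast_nonneg _), show (4 : ℝ) = 2 ^ 2 by norm_num,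
          Real.sqrt_sq zero_le_two]

end L1Ball

/-- Lemma 1, smoothing via L₁ randomization: If `f` is convex and
`M₂`-Lipschitz in the Euclidean norm and `ẽ` is uniform on the unit ℓ₁-ball, then
`f x ≤ f_γ x ≤ f x + (2/√d) γ M₂`, where `f_γ x = E[f (x + γ ẽ)]`. -/
theorem smoothing_sandwich_L1 {d : ℕ} (hd : 0 < d) (f : EuclideanSpace ℝ (Fin d) → ℝ)
    (M₂ : ℝ) (hconv : ConvexOn ℝ Set.univ f)
    (hf : ∀ x y : EuclideanSpace ℝ (Fin d), |f y - f x| ≤ M₂ * ‖y - x‖)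
    (γ : ℝ) (hγ : 0 < γ) (x : EuclideanSpace ℝ (Fin d)) :
    f x ≤ (⨍ e in {z : EuclideanSpace ℝ (Fin d) | ∑ i, |z i| ≤ 1}, f (x + γ • e)) ∧
      (⨍ e in {z : EuclideanSpace ℝ (Fin d) | ∑ i, |z i| ≤ 1}, f (x + γ • e)) ≤
        f x + (2 / Real.sqrt d) * γ * M₂ := by
  have : Nonempty (Fin d) := ⟨⟨0, hd⟩⟩
  have hM₂ : 0 ≤ M₂ := nonneg_of_abs_sub_le_mul_norm hf
  refine ⟨hconv.le_setAverage_add_smul (continuous_of_abs_sub_le_mul_norm hf) isCompact_l1Ball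
    volume_l1Ball_pos.ne' (setIntegral_id_eq_zero_of_neg_eq neg_l1Ball) x γ, ?_⟩
  calc ⨍ e in l1Ball (Fin d), f (x + γ • e)
      ≤ f x + M₂ * γ * ⨍ e in l1Ball (Fin d), ‖e‖ :=
        setAverage_add_smul_le hf hγ.le isCompact_l1Ball volume_l1Ball_pos.ne' x
    _ ≤ f x + M₂ * γ * (2 / √d) := by
        gcongr
        simpa using setAverage_l1Ball_norm_le (ι := Fin d)
    _ = f x + 2 / √d * γ * M₂ := by ring
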